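/- Let A be an n×n nonnegative matrix with λ(A) = 1, and let A^{[C]} denote the matrix with entries a^{[C]}_{ij} = a_{ij} if (i,j) is an edge of the critical graph of A and 0 otherwise. Then the critical-part operation commutes with max-times powers: (A^k)^{[C]} = (A^{[C]})^k for all k ≥ 1, where the critical graph of A^k is used on the left. -/

import Mathlib

open scoped NNReal

/-- Max-times matrix product. -/
noncomputable def maxMul {n : ℕ} (A B : Matrix (Fin n) (Fin n) ℝ≥0) : Matrix (Fin n) (Fin n) ℝ≥0 :=
  fun i j => Finset.univ.sup fun k => A i k * B k j

/-- Max-times matrix power. -/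
noncomputable def maxPow {n : ℕ} (A : Matrix (Fin n) (Fin n) ℝ≥0) : ℕ → Matrix (Fin n) (Fin n) ℝ≥0
  | 0 => fun i j => if i = j then 1 else 0
  | (k+1) => maxMul (maxPow A k) A

/-- Max-times matrix-vector product. -/
noncomputable def maxVec {n : ℕ} (A : Matrix (Fin n) (Fin n) ℝ≥0) (x : Fin n → ℝ≥0) : Fin n → ℝ≥0 :=
  fun i => Finset.univ.sup fun j => A i j * x j

/-- Weight of the cycle visiting `c 0, c 1, ..., c m, c 0` (indices cyclic in `Fin (m+1)`). -/
noncomputable def cycleWeight {n m : ℕ} (A : Matrix (Fin n) (Fin n) ℝ≥0) (c : Fin (m+1) → Fin n) : ℝ≥0 :=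
  ∏ i : Fin (m+1), A (c i) (c (i + 1))

/-- Kleene star `I ⊕ A ⊕ ... ⊕ A^{n-1}`. -/
noncomputable def kleeneStar {n : ℕ} (A : Matrix (Fin n) (Fin n) ℝ≥0) : Matrix (Fin n) (Fin n) ℝ≥0 :=
  fun i j => (Finset.range n).sup fun k => maxPow A k i j

/-- `(i,j)` is an edge of the critical graph of `M`: it lies on a cycle of weight 1. -/
def critEdge {n : ℕ} (M : Matrix (Fin n) (Fin n) ℝ≥0) (i j : Fin n) : Prop :=
  ∃ (m : ℕ) (c : Fin (m+1) → Fin n), c 0 = i ∧ c 1 = j ∧ cycleWeight M c = 1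

open Classical in
/-- The critical matrix of `M`: entries of `M` on critical edges, 0 elsewhere. -/
noncomputable def critMat {n : ℕ} (M : Matrix (Fin n) (Fin n) ℝ≥0) :
    Matrix (Fin n) (Fin n) ℝ≥0 :=
  fun i j => if critEdge M i j then M i j else 0

namespace CritAux

variable {n : ℕ}

/-- Weight of the walk `p 0, p 1, ..., p k`. -/
noncomputable def walkW (M : Matrix (Fin n) (Fin n) ℝ≥0) (p : ℕ → Fin n) (k : ℕ) : ℝ≥0 :=
  ∏ t ∈ Finset.range k, M (p t) (p (t+1))

/-- `(i,j)` lies on a closed walk of weight one. -/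
def critW (M : Matrix (Fin n) (Fin n) ℝ≥0) (i j : Fin n) : Prop :=
  ∃ (p : ℕ → Fin n) (m : ℕ), 0 < m ∧ p 0 = i ∧ p 1 = j ∧ p m = p 0 ∧ walkW M p m = 1

/-- Concatenation of walks. -/
def concatW (p : ℕ → Fin n) (a : ℕ) (q : ℕ → Fin n) : ℕ → Fin n :=
  fun t => if t ≤ a then p t else q (t - a)

lemma walkW_congr {M : Matrix (Fin n) (Fin n) ℝ≥0} {p q : ℕ → Fin n} {k : ℕ}
    (h : ∀ t ≤ k, p t = q t) : walkW M p k = walkW M q k := by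
  refine Finset.prod_congr rfl fun t ht => ?_
  have ht' := Finset.mem_range.mp ht
  rw [h t (by omega), h (t+1) (by omega)]

lemma walkW_split (M : Matrix (Fin n) (Fin n) ℝ≥0) (p : ℕ → Fin n) (a b : ℕ) :
    walkW M p (a + b) = walkW M p a * walkW M (fun t => p (t + a)) b := by
  unfold walkW
  rw [Finset.prod_range_add]
  congr 1
  refine Finset.prod_congr rfl fun t _ => ?_
  show M (p (a + t)) (p (a + t + 1)) = M (p (t + a)) (p (t + 1 + a))
  congr 2 <;> omega

lemma walkW_concat (M : Matrix (Fin n) (Fin n) ℝ≥0) {p : ℕ → Fin n} {a : ℕ} {q : ℕ → Fin n}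
    (b : ℕ) (h : p a = q 0) :
    walkW M (concatW p a q) (a + b) = walkW M p a * walkW M q b := by
  rw [walkW_split]
  congr 1
  · exact walkW_congr fun t ht => by simp [concatW, ht]
  · refine walkW_congr fun t ht => ?_
    rcases Nat.eq_zero_or_pos t with rfl | hpos
    · simp [concatW, h.symm]
    · simp only [concatW]
      rw [if_neg (by omega)]
      congr 1
      omega

lemma walkW_segments (M : Matrix (Fin n) (Fin n) ℝ≥0) (p : ℕ → Fin n) (k : ℕ) :
    ∀ m, walkW M p (m * k) = ∏ s ∈ Finset.range m, walkW M (fun t => p (t + s * k)) k := by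
  intro m
  induction m with
  | zero => simp [walkW]
  | succ m ih =>
      rw [Finset.prod_range_succ, ← ih, Nat.succ_mul, walkW_split]

lemma walkW_le_maxPow (M : Matrix (Fin n) (Fin n) ℝ≥0) (p : ℕ → Fin n) :
    ∀ k, walkW M p k ≤ maxPow M k (p 0) (p k) := by
  intro k
  induction k with
  | zero => simp [walkW, maxPow]
  | succ k ih =>
      have : walkW M p (k+1) = walkW M p k * M (p k) (p (k+1)) := by
        unfold walkW; rw [Finset.prod_range_succ]
      rw [this]
      calc walkW M p k * M (p k) (p (k+1))
          ≤ maxPow M k (p 0) (p k) * M (p k) (p (k+1)) := mul_le_mul_left ih _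
        _ ≤ maxPow M (k+1) (p 0) (p (k+1)) := by
            show _ ≤ maxMul (maxPow M k) M (p 0) (p (k+1))
            exact Finset.le_sup (f := fun l => maxPow M k (p 0) l * M l (p (k+1)))
              (Finset.mem_univ (p k))

lemma exists_walk (M : Matrix (Fin n) (Fin n) ℝ≥0) :
    ∀ k (i j : Fin n), maxPow M k i j ≠ 0 →
      ∃ p : ℕ → Fin n, p 0 = i ∧ p k = j ∧ walkW M p k = maxPow M k i j := by
  intro k
  induction k with
  | zero =>
      intro i j h
      have hij : i = j := by
        by_contra hne
        simp [maxPow, hne] at h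
      exact ⟨fun _ => i, rfl, hij, by simp [walkW, maxPow, hij]⟩
  | succ k ih =>
      intro i j h
      haveI : Nonempty (Fin n) := ⟨i⟩
      have hsup : maxPow M (k+1) i j = Finset.univ.sup fun l => maxPow M k i l * M l j := rfl
      obtain ⟨l, -, hl⟩ := Finset.exists_mem_eq_sup (Finset.univ (α := Fin n))
        Finset.univ_nonempty (fun l => maxPow M k i l * M l j)
      rw [hsup, hl] at h ⊢
      have h1 : maxPow M k i l ≠ 0 := fun h0 => h (by simp [h0])
      obtain ⟨p', hp0, hpk, hpw⟩ := ih i l h1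
      refine ⟨fun t => if t ≤ k then p' t else j, by simp [hp0], by simp, ?_⟩
      have hsplit : walkW M (fun t => if t ≤ k then p' t else j) (k+1)
          = walkW M (fun t => if t ≤ k then p' t else j) k *
            M ((fun t => if t ≤ k then p' t else j) k) j := by
        unfold walkW; rw [Finset.prod_range_succ]; simp
      rw [hsplit]
      have : walkW M (fun t => if t ≤ k then p' t else j) k = walkW M p' k :=
        walkW_congr fun t ht => by simp [ht]
      rw [this, hpw]
      simp [hpk]

end CritAux
namespace CritAux

variable {n : ℕ}

/-- From a closed ℕ-indexed walk, produce a `cycleWeight` cycle with the same weight. -/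
lemma exists_cycle_of_closed (M : Matrix (Fin n) (Fin n) ℝ≥0) {p : ℕ → Fin n} {m' : ℕ}
    (hc : p (m'+1) = p 0) :
    ∃ c : Fin (m'+1) → Fin n, c 0 = p 0 ∧ c 1 = p 1 ∧ cycleWeight M c = walkW M p (m'+1) := by
  refine ⟨fun i => p i.val, rfl, ?_, ?_⟩
  · rcases Nat.eq_zero_or_pos m' with rfl | hm'
    · show p ((1 : Fin 1).val) = p 1
      have : (1 : Fin 1).val = 0 := rfl
      rw [this, ← hc]
    · show p ((1 : Fin (m'+1)).val) = p 1
      have h1 : (1 : Fin (m'+1)).val = 1 := by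
        rw [Fin.val_one']; exact Nat.mod_eq_of_lt (by omega)
      rw [h1]
  · unfold cycleWeight walkW
    rw [← Fin.prod_univ_eq_prod_range (fun t => M (p t) (p (t+1))) (m'+1)]
    refine Finset.prod_congr rfl fun i _ => ?_
    show M (p i.val) (p ((i+1 : Fin (m'+1)).val)) = M (p i.val) (p (i.val + 1))
    by_cases hlast : i = Fin.last m'
    · have h1 : ((i+1 : Fin (m'+1)).val) = 0 := by
        rw [Fin.val_add_one, if_pos hlast]
      rw [h1, hlast]
      simp only [Fin.val_last]
      rw [hc]
    · have h1 : ((i+1 : Fin (m'+1)).val) = i.val + 1 := by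
        rw [Fin.val_add_one, if_neg hlast]
      rw [h1]

open Fin.NatCast in
/-- From a `cycleWeight` cycle, produce a closed ℕ-indexed walk with the same weight. -/
lemma exists_closed_of_cycle (M : Matrix (Fin n) (Fin n) ℝ≥0) {m : ℕ} (c : Fin (m+1) → Fin n) :
    ∃ p : ℕ → Fin n, p 0 = c 0 ∧ p 1 = c 1 ∧ p (m+1) = p 0 ∧
      walkW M p (m+1) = cycleWeight M c := by
  refine ⟨fun t => c (t : ℕ), by simp, by simp, ?_, ?_⟩
  · simp [Fin.natCast_self]
  · unfold cycleWeight walkW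
    rw [← Fin.prod_univ_eq_prod_range (fun t => M (c (t : ℕ)) (c ((t+1 : ℕ)))) (m+1)]
    refine (Finset.prod_congr rfl fun i _ => ?_).symm
    have h1 : ((i.val : ℕ) : Fin (m+1)) = i := Fin.cast_val_eq_self i
    have h2 : ((i.val + 1 : ℕ) : Fin (m+1)) = i + 1 := by push_cast [h1]; rfl
    rw [h1, h2]

/-- Every edge of a closed walk of weight one is critical (in the walk sense). -/
lemma critW_of_closed (M : Matrix (Fin n) (Fin n) ℝ≥0) {p : ℕ → Fin n} {m : ℕ}
    (hc : p m = p 0) (hw : walkW M p m = 1) :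
    ∀ t < m, critW M (p t) (p (t+1)) := by
  intro t ht
  set Q : ℕ → Fin n := fun s => if s + t ≤ m then p (s + t) else p (s + t - m) with hQ
  have hm : 0 < m := by omega
  refine ⟨Q, m, hm, ?_, ?_, ?_, ?_⟩
  · show (if 0 + t ≤ m then p (0 + t) else _) = p t
    rw [if_pos (by omega)]; congr 1; omega
  · show (if 1 + t ≤ m then p (1 + t) else _) = p (t+1)
    rw [if_pos (by omega)]; congr 1; omega
  · show Q m = Q 0
    have h0 : Q 0 = p t := by
      show (if 0 + t ≤ m then p (0 + t) else _) = p t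
      rw [if_pos (by omega)]; congr 1; omega
    rw [h0]
    rcases Nat.eq_zero_or_pos t with rfl | hpos
    · show (if m + 0 ≤ m then p (m + 0) else _) = p 0
      rw [if_pos (by omega)]
      rw [show m + 0 = m by omega, hc]
    · show (if m + t ≤ m then _ else p (m + t - m)) = p t
      rw [if_neg (by omega)]; congr 1; omega
  · have hsplit : walkW M Q ((m - t) + t) =
        walkW M Q (m - t) * walkW M (fun s => Q (s + (m - t))) t := walkW_split M Q _ _
    have hmt : (m - t) + t = m := by omega
    rw [hmt] at hsplit
    have h1 : walkW M Q (m - t) = walkW M (fun s => p (s + t)) (m - t) := by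
      refine walkW_congr fun s hs => ?_
      show (if s + t ≤ m then p (s + t) else _) = p (s + t)
      rw [if_pos (by omega)]
    have h2 : walkW M (fun s => Q (s + (m - t))) t = walkW M p t := by
      refine walkW_congr fun s hs => ?_
      show (if s + (m - t) + t ≤ m then p (s + (m - t) + t) else p (s + (m - t) + t - m)) = p s
      rcases Nat.eq_zero_or_pos s with rfl | hpos
      · rw [if_pos (by omega)]
        rw [show 0 + (m - t) + t = m by omega, hc]
      · rw [if_neg (by omega)]; congr 1; omega
    have hpw : walkW M p m = walkW M p t * walkW M (fun s => p (s + t)) (m - t) := by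
      rw [← walkW_split, show t + (m - t) = m by omega]
    rw [hsplit, h1, h2, mul_comm, ← hpw, hw]

end CritAux
namespace CritAux

variable {n : ℕ}

lemma critEdge_iff_critW (M : Matrix (Fin n) (Fin n) ℝ≥0) (i j : Fin n) :
    critEdge M i j ↔ critW M i j := by
  constructor
  · rintro ⟨m, c, hc0, hc1, hcw⟩
    obtain ⟨p, hp0, hp1, hpc, hpw⟩ := exists_closed_of_cycle M c
    exact ⟨p, m+1, Nat.succ_pos m, hp0.trans hc0, hp1.trans hc1, hpc, hpw.trans hcw⟩
  · rintro ⟨p, m, hm, hp0, hp1, hpc, hpw⟩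
    obtain ⟨m', rfl⟩ : ∃ m', m = m' + 1 := ⟨m - 1, by omega⟩
    obtain ⟨c, hc0, hc1, hcw⟩ := exists_cycle_of_closed M hpc
    exact ⟨m', c, hc0.trans hp0, hc1.trans hp1, hcw.trans hpw⟩

/-- Transfer of the cycle bound to closed walks. -/
lemma closed_le_one {A : Matrix (Fin n) (Fin n) ℝ≥0}
    (hcyc : ∀ (m : ℕ) (c : Fin (m+1) → Fin n), cycleWeight A c ≤ 1)
    {p : ℕ → Fin n} {m : ℕ} (hm : 0 < m) (hc : p m = p 0) : walkW A p m ≤ 1 := by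
  obtain ⟨m', rfl⟩ : ∃ m', m = m' + 1 := ⟨m - 1, by omega⟩
  obtain ⟨c, -, -, hcw⟩ := exists_cycle_of_closed A hc
  rw [← hcw]
  exact hcyc m' c

/-- Lift a walk of `maxPow A k` to a walk of `A` (exactly, segment by segment),
assuming all the traversed entries are nonzero. -/
lemma exists_lift (A : Matrix (Fin n) (Fin n) ℝ≥0) {k : ℕ} (hk : 0 < k) (c' : ℕ → Fin n) :
    ∀ m, (∀ s < m, maxPow A k (c' s) (c' (s+1)) ≠ 0) →
    ∃ P : ℕ → Fin n, (∀ s ≤ m, P (s * k) = c' s) ∧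
      (∀ s < m, walkW A (fun t => P (t + s * k)) k = maxPow A k (c' s) (c' (s+1))) := by
  intro m
  induction m with
  | zero =>
      intro _
      refine ⟨fun _ => c' 0, fun s hs => ?_, fun s hs => by omega⟩
      rw [Nat.le_zero.mp hs]
  | succ m ih =>
      intro hne
      obtain ⟨P, hP, hseg⟩ := ih fun s hs => hne s (by omega)
      obtain ⟨r, hr0, hrk, hrw⟩ := exists_walk A k (c' m) (c' (m+1)) (hne m (by omega))
      refine ⟨concatW P (m * k) r, ?_, ?_⟩
      · intro s hs
        rcases Nat.lt_or_ge s (m+1) with hlt | hge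
        · have h1 : s * k ≤ m * k := Nat.mul_le_mul_right k (by omega)
          show (if s * k ≤ m * k then P (s * k) else _) = c' s
          rw [if_pos h1]
          exact hP s (by omega)
        · have hs' : s = m + 1 := by omega
          rw [hs']
          show (if (m+1) * k ≤ m * k then _ else r ((m+1) * k - m * k)) = c' (m+1)
          rw [if_neg (by nlinarith [Nat.succ_mul m k])]
          rw [show (m+1) * k - m * k = k by rw [Nat.succ_mul]; omega]
          exact hrk
      · intro s hs
        rcases Nat.lt_or_ge s m with hlt | hge
        · have : walkW A (fun t => concatW P (m * k) r (t + s * k)) k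
              = walkW A (fun t => P (t + s * k)) k := by
            refine walkW_congr fun t ht => ?_
            show (if t + s * k ≤ m * k then P (t + s * k) else _) = P (t + s * k)
            rw [if_pos ?_]
            calc t + s * k ≤ k + s * k := by omega
              _ = (s + 1) * k := by rw [Nat.succ_mul]; omega
              _ ≤ m * k := Nat.mul_le_mul_right k (by omega)
          rw [this]
          exact hseg s hlt
        · have hs' : s = m := by omega
          rw [hs']
          have : walkW A (fun t => concatW P (m * k) r (t + m * k)) k = walkW A r k := by
            refine walkW_congr fun t ht => ?_
            rcases Nat.eq_zero_or_pos t with rfl | hpos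
            · show (if 0 + m * k ≤ m * k then P (0 + m * k) else _) = r 0
              rw [if_pos (by omega), show 0 + m * k = m * k by omega, hP m (by omega), hr0]
            · show (if t + m * k ≤ m * k then _ else r (t + m * k - m * k)) = r t
              rw [if_neg (by omega)]
              congr 1
              omega
          rw [this, hrw]

/-- Closed walks of `maxPow A k` have weight at most one. -/
lemma pow_closed_le_one {A : Matrix (Fin n) (Fin n) ℝ≥0}
    (hcyc : ∀ (m : ℕ) (c : Fin (m+1) → Fin n), cycleWeight A c ≤ 1)
    {k : ℕ} (hk : 0 < k) {c' : ℕ → Fin n} {m : ℕ} (hm : 0 < m) (hc : c' m = c' 0) :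
    walkW (maxPow A k) c' m ≤ 1 := by
  by_cases h0 : walkW (maxPow A k) c' m = 0
  · rw [h0]; exact zero_le_one
  · have hne : ∀ s < m, maxPow A k (c' s) (c' (s+1)) ≠ 0 := by
      intro s hs
      have := Finset.prod_ne_zero_iff.mp h0
      exact this s (Finset.mem_range.mpr hs)
    obtain ⟨P, hP, hseg⟩ := exists_lift A hk c' m hne
    have hPw : walkW A P (m * k) = walkW (maxPow A k) c' m := by
      rw [walkW_segments]
      exact Finset.prod_congr rfl fun s hs => hseg s (Finset.mem_range.mp hs)
    have hPc : P (m * k) = P 0 := by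
      have h1 := hP m le_rfl
      have h2 := hP 0 (by omega)
      rw [h1, hc, ← h2, Nat.zero_mul]
    rw [← hPw]
    exact closed_le_one hcyc (by positivity) hPc

end CritAux
namespace CritAux

variable {n : ℕ}

/-- A path of critical edges extends to a closed walk of weight one having it as a prefix. -/
lemma critPathClosure (A : Matrix (Fin n) (Fin n) ℝ≥0) :
    ∀ k, 0 < k → ∀ p : ℕ → Fin n, (∀ t < k, critW A (p t) (p (t+1))) →
      ∃ (q : ℕ → Fin n) (m : ℕ), k ≤ m ∧ (∀ t ≤ k, q t = p t) ∧ q m = q 0 ∧ walkW A q m = 1 := by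
  intro k hk
  induction k with
  | zero => omega
  | succ k ih =>
      intro p hcrit
      rcases Nat.eq_zero_or_pos k with rfl | hkpos
      · -- base case k+1 = 1
        obtain ⟨q, m, hm, hq0, hq1, hqc, hqw⟩ := hcrit 0 (by omega)
        refine ⟨q, m, hm, ?_, hqc, hqw⟩
        intro t ht
        interval_cases t
        · exact hq0
        · exact hq1
      · obtain ⟨q, m, hkm, hpre, hqc, hqw⟩ := ih hkpos p (fun t ht => hcrit t (by omega))
        obtain ⟨r, m', hm', hr0, hr1, hrc, hrw⟩ := hcrit k (by omega)
        set s1 : ℕ → Fin n := concatW p k r with hs1def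
        set s : ℕ → Fin n := concatW s1 (k + m') (fun t => q (t + k)) with hsdef
        have hq0p : q 0 = p 0 := hpre 0 (by omega)
        have hqkp : q k = p k := hpre k le_rfl
        have hs1km : s1 (k + m') = p k := by
          show (if k + m' ≤ k then p (k + m') else r (k + m' - k)) = p k
          rw [if_neg (by omega), show k + m' - k = m' by omega, hrc, hr0]
        refine ⟨s, (k + m') + (m - k), by omega, ?_, ?_, ?_⟩
        · -- prefix
          intro t ht
          have hts : t ≤ k + m' := by omega
          have h1 : s t = s1 t := by
            show (if t ≤ k + m' then s1 t else _) = s1 t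
            rw [if_pos hts]
          rw [h1]
          rcases Nat.lt_or_ge t (k+1) with h | h
          · rcases Nat.lt_or_ge t k with h2 | h2
            · show (if t ≤ k then p t else _) = p t
              rw [if_pos (by omega)]
            · have ht' : t = k := by omega
              rw [ht']
              show (if k ≤ k then p k else _) = p k
              rw [if_pos le_rfl]
          · have ht' : t = k + 1 := by omega
            rw [ht']
            show (if k + 1 ≤ k then _ else r (k + 1 - k)) = p (k+1)
            rw [if_neg (by omega), show k + 1 - k = 1 by omega, hr1]
        · -- closed
          have hs0 : s 0 = p 0 := by
            show (if 0 ≤ k + m' then s1 0 else _) = p 0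
            rw [if_pos (by omega)]
            show (if 0 ≤ k then p 0 else _) = p 0
            rw [if_pos (by omega)]
          rcases Nat.eq_zero_or_pos (m - k) with hmk | hmk
          · have h1 : (k + m') + (m - k) = k + m' := by omega
            rw [h1]
            have h2 : s (k + m') = s1 (k + m') := by
              show (if k + m' ≤ k + m' then s1 (k + m') else _) = s1 (k + m')
              rw [if_pos le_rfl]
            have hmk' : m = k := by omega
            rw [h2, hs1km, hs0]
            calc p k = q k := hqkp.symm
              _ = q m := by rw [hmk']
              _ = q 0 := hqc
              _ = p 0 := hq0p
          · have h1 : s ((k + m') + (m - k)) = q ((m - k) + k) := by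
              show (if (k + m') + (m - k) ≤ k + m' then _ else
                  q ((k + m') + (m - k) - (k + m') + k)) = q ((m - k) + k)
              rw [if_neg (by omega)]
              congr 1
              omega
            rw [h1, hs0, show (m - k) + k = m by omega, hqc, hq0p]
        · -- weight
          have hjunction : s1 (k + m') = (fun t => q (t + k)) 0 := by
            rw [hs1km]
            show p k = q (0 + k)
            rw [show 0 + k = k by omega, hqkp]
          have hw1 : walkW A s ((k + m') + (m - k)) =
              walkW A s1 (k + m') * walkW A (fun t => q (t + k)) (m - k) :=
            walkW_concat A (m - k) hjunction
          have hw2 : walkW A s1 (k + m') = walkW A p k * walkW A r m' :=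
            walkW_concat A m' hr0.symm
          have hw3 : walkW A q m = walkW A q k * walkW A (fun t => q (t + k)) (m - k) := by
            rw [← walkW_split, show k + (m - k) = m by omega]
          have hw4 : walkW A q k = walkW A p k := walkW_congr fun t ht => hpre t ht
          rw [hw1, hw2, hrw, mul_one]
          rw [hw3, hw4] at hqw
          exact hqw

end CritAux
namespace CritAux

variable {n : ℕ}

lemma critW_pow {A : Matrix (Fin n) (Fin n) ℝ≥0}
    (hcyc : ∀ (m : ℕ) (c : Fin (m+1) → Fin n), cycleWeight A c ≤ 1)
    {k : ℕ} (hk : 0 < k) {p : ℕ → Fin n}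
    (hcrit : ∀ t < k, critW A (p t) (p (t+1))) :
    critW (maxPow A k) (p 0) (p k) := by
  obtain ⟨q, m, hkm, hpre, hqc, hqw⟩ := critPathClosure A k hk p hcrit
  have hm : 0 < m := by omega
  set Q : ℕ → Fin n := fun t => q (t % m) with hQdef
  have hQq : ∀ t ≤ m, Q t = q t := by
    intro t ht
    show q (t % m) = q t
    rcases Nat.lt_or_ge t m with h | h
    · rw [Nat.mod_eq_of_lt h]
    · have ht' : t = m := by omega
      rw [ht', Nat.mod_self, hqc]
  have hQw : walkW A Q m = 1 := by rw [walkW_congr hQq, hqw]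
  have hQmul : ∀ c, walkW A Q (c * m) = 1 := by
    intro c
    induction c with
    | zero => simp [walkW]
    | succ c ihc =>
        rw [Nat.succ_mul, walkW_split, ihc, one_mul]
        rw [walkW_congr (q := Q) fun t ht => ?_, hQw]
        show q ((t + c * m) % m) = q (t % m)
        rw [Nat.add_mul_mod_self_right]
  set c' : ℕ → Fin n := fun s => Q (s * k) with hc'def
  have hc'c : c' m = c' 0 := by
    show q (m * k % m) = q (0 * k % m)
    rw [Nat.mul_mod_right, Nat.zero_mul, Nat.zero_mod]
  have hge : (1 : ℝ≥0) ≤ walkW (maxPow A k) c' m := by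
    have h1 : walkW A Q (m * k) = 1 := by rw [Nat.mul_comm]; exact hQmul k
    have h2 : walkW A Q (m * k) = ∏ s ∈ Finset.range m, walkW A (fun t => Q (t + s * k)) k :=
      walkW_segments A Q k m
    have h3 : ∀ s ∈ Finset.range m,
        walkW A (fun t => Q (t + s * k)) k ≤ maxPow A k (c' s) (c' (s+1)) := by
      intro s _
      have := walkW_le_maxPow A (fun t => Q (t + s * k)) k
      have e1 : (0 : ℕ) + s * k = s * k := by omega
      have e2 : k + s * k = (s + 1) * k := by rw [Nat.succ_mul]; omega
      rw [e1, e2] at this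
      exact this
    calc (1 : ℝ≥0) = walkW A Q (m * k) := h1.symm
      _ = ∏ s ∈ Finset.range m, walkW A (fun t => Q (t + s * k)) k := h2
      _ ≤ ∏ s ∈ Finset.range m, maxPow A k (c' s) (c' (s+1)) := Finset.prod_le_prod' h3
      _ = walkW (maxPow A k) c' m := rfl
  have hle := pow_closed_le_one hcyc hk hm hc'c
  have hw : walkW (maxPow A k) c' m = 1 := le_antisymm hle hge
  have hc'0 : c' 0 = p 0 := by
    show q (0 * k % m) = p 0
    rw [Nat.zero_mul, Nat.zero_mod]
    exact hpre 0 (by omega)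
  have hc'1 : c' 1 = p k := by
    show q (1 * k % m) = p k
    rw [Nat.one_mul]
    rcases Nat.lt_or_ge k m with h | h
    · rw [Nat.mod_eq_of_lt h]
      exact hpre k le_rfl
    · have hkm' : k = m := by omega
      rw [hkm', Nat.mod_self]
      calc q 0 = q m := hqc.symm
        _ = q k := by rw [hkm']
        _ = p k := hpre k le_rfl
        _ = p m := by rw [hkm']
  exact ⟨c', m, hm, hc'0, hc'1, hc'c, hw⟩

end CritAux
open CritAux in
/-- Taking the critical part commutes with max-times powers when `λ(A) = 1`. -/
theorem critMat_maxPow {n : ℕ} (A : Matrix (Fin n) (Fin n) ℝ≥0)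
    (hcyc : ∀ (m : ℕ) (c : Fin (m+1) → Fin n), cycleWeight A c ≤ 1)
    (hone : ∃ (m : ℕ) (c : Fin (m+1) → Fin n), cycleWeight A c = 1) :
    ∀ k : ℕ, 1 ≤ k → critMat (maxPow A k) = maxPow (critMat A) k := by
  intro k hk
  have hk' : 0 < k := hk
  funext i j
  apply le_antisymm
  · -- `critMat (maxPow A k) i j ≤ maxPow (critMat A) k i j`
    by_cases hce : critEdge (maxPow A k) i j
    · have hLHS : critMat (maxPow A k) i j = maxPow A k i j := by
        unfold critMat; rw [if_pos hce]
      rw [hLHS]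
      obtain ⟨c', m, hm, h0, h1, hcl, hw⟩ := (critEdge_iff_critW (maxPow A k) i j).mp hce
      have hw0 : walkW (maxPow A k) c' m ≠ 0 := by rw [hw]; exact one_ne_zero
      have hne : ∀ s < m, maxPow A k (c' s) (c' (s+1)) ≠ 0 := fun s hs =>
        Finset.prod_ne_zero_iff.mp hw0 s (Finset.mem_range.mpr hs)
      obtain ⟨P, hP, hseg⟩ := exists_lift A hk' c' m hne
      have hPw : walkW A P (m * k) = walkW (maxPow A k) c' m := by
        rw [walkW_segments]
        exact Finset.prod_congr rfl fun s hs => hseg s (Finset.mem_range.mp hs)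
      have hPc : P (m * k) = P 0 := by
        have e0 := hP 0 (by omega)
        have em := hP m le_rfl
        rw [em, hcl, ← e0, Nat.zero_mul]
      have hPw1 : walkW A P (m * k) = 1 := by rw [hPw, hw]
      have hcritP : ∀ t < m * k, critW A (P t) (P (t+1)) := critW_of_closed A hPc hPw1
      have hkmk : k ≤ m * k := Nat.le_mul_of_pos_left k hm
      have hPk : walkW A P k = maxPow A k i j := by
        have hseg0 := hseg 0 hm
        rw [walkW_congr (q := fun t => P (t + 0 * k)) (fun t ht => by simp), hseg0, h0, h1]
      have hPcrit : walkW (critMat A) P k = walkW A P k := by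
        refine Finset.prod_congr rfl fun t ht => ?_
        have ht' := Finset.mem_range.mp ht
        have hc : critEdge A (P t) (P (t+1)) :=
          (critEdge_iff_critW A _ _).mpr (hcritP t (by omega))
        show critMat A (P t) (P (t+1)) = A (P t) (P (t+1))
        unfold critMat; rw [if_pos hc]
      have hP0 : P 0 = i := by
        have := hP 0 (by omega); rwa [Nat.zero_mul, h0] at this
      have hPk' : P k = j := by
        have := hP 1 (by omega); rwa [Nat.one_mul, h1] at this
      calc maxPow A k i j = walkW (critMat A) P k := by rw [hPcrit, hPk]
        _ ≤ maxPow (critMat A) k (P 0) (P k) := walkW_le_maxPow _ P k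
        _ = maxPow (critMat A) k i j := by rw [hP0, hPk']
    · have hLHS : critMat (maxPow A k) i j = 0 := by
        unfold critMat; rw [if_neg hce]
      rw [hLHS]
      exact zero_le
  · -- `maxPow (critMat A) k i j ≤ critMat (maxPow A k) i j`
    by_cases h0 : maxPow (critMat A) k i j = 0
    · rw [h0]; exact zero_le
    · obtain ⟨p, hp0, hpk, hpw⟩ := exists_walk (critMat A) k i j h0
      have hedge : ∀ t < k, critEdge A (p t) (p (t+1)) ∧
          critMat A (p t) (p (t+1)) = A (p t) (p (t+1)) := by
        intro t ht
        have hne : critMat A (p t) (p (t+1)) ≠ 0 := by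
          intro hz
          apply h0
          rw [← hpw]
          exact Finset.prod_eq_zero (Finset.mem_range.mpr ht) hz
        by_cases hc : critEdge A (p t) (p (t+1))
        · refine ⟨hc, ?_⟩
          unfold critMat; rw [if_pos hc]
        · exfalso
          apply hne
          unfold critMat; rw [if_neg hc]
      have hwA : walkW (critMat A) p k = walkW A p k :=
        Finset.prod_congr rfl fun t ht => (hedge t (Finset.mem_range.mp ht)).2
      have hcw : ∀ t < k, critW A (p t) (p (t+1)) := fun t ht =>
        (critEdge_iff_critW A _ _).mp (hedge t ht).1
      have hpow : critW (maxPow A k) (p 0) (p k) := critW_pow hcyc hk' hcw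
      have hce : critEdge (maxPow A k) i j := by
        rw [← hp0, ← hpk]
        exact (critEdge_iff_critW _ _ _).mpr hpow
      have hLHS : critMat (maxPow A k) i j = maxPow A k i j := by
        unfold critMat; rw [if_pos hce]
      rw [hLHS]
      calc maxPow (critMat A) k i j = walkW (critMat A) p k := hpw.symm
        _ = walkW A p k := hwA
        _ ≤ maxPow A k (p 0) (p k) := walkW_le_maxPow A p k
        _ = maxPow A k i j := by rw [hp0, hpk]
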